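/- The map σ₁ is a birational involution of ℙ²(ℂ) (there exists a nonzero homogeneous polynomial μ of degree 3 with σ₁ᵢ(σ₁(b)) = μ(b)·bᵢ for i = 0, 1, 2), and it lifts the twist β₁ × β₁ through Φ̃: the identity Φ̃ ∘ σ₁ = (β₁ × β₁) ∘ Φ̃ holds as rational maps ℙ² ⇢ ℙ¹×ℙ¹, i.e. writing Φ̃ = (Φ̃₁, Φ̃₂) in affine coordinates, Φ̃₁(σ₁(b)) = (Φ̃₁(b) − λ)/(Φ̃₁(b) − 1) and Φ̃₂(σ₁(b)) = (Φ̃₂(b) − λ)/(Φ̃₂(b) − 1) wherever both sides are defined. -/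

import Mathlib

/-- First affine coordinate of `Φ̃`. -/
noncomputable def Phi1 (t b₀ b₁ b₂ : ℂ) : ℂ := (b₁ * t - b₂) / (b₀ * t - b₁)

/-- Second affine coordinate of `Φ̃`. -/
noncomputable def Phi2 (l b₀ b₁ b₂ : ℂ) : ℂ :=
  -b₁ * (b₀ * l - b₁ * l - b₁ + b₂) / (b₁ ^ 2 - b₀ * b₂)

/-- First component of the involution `σ₁`. -/
noncomputable def sigma10 (l t b₀ b₁ b₂ : ℂ) : ℂ :=
  (t * b₀ - (1 + t) * b₁ + b₂) * ((l - t - 1) * b₁ + t * b₀)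

/-- Second component of the involution `σ₁`. -/
noncomputable def sigma11 (l t b₀ b₁ b₂ : ℂ) : ℂ :=
  t * (l * b₀ - b₁) * (t * b₀ + (-1 - t) * b₁ + b₂)

/-- Third component of the involution `σ₁`. -/
noncomputable def sigma12 (l t b₀ b₁ b₂ : ℂ) : ℂ :=
  t * (l ^ 2 * t * b₀ ^ 2 + (l ^ 2 + t) * b₁ ^ 2 + (-l ^ 2 - l * t - l ^ 2 * t) * b₀ * b₁
      + (l - t + l * t) * b₀ * b₂ - l * b₁ * b₂)

/-!
`σ₁` is a quadratic Cremona involution: it contracts the three lines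
`t b₀ - (1 + t) b₁ + b₂ = 0`, `b₁ = b₀` and `b₁ = t b₀`, so `σ₁ ∘ σ₁` is the identity
multiplied by the product of these three linear forms, up to a constant that is nonzero when
`λ ≠ 1`, `t ≠ 0` and `t ≠ λ`. Both coordinates of `Φ̃` are ratios of forms, and the lifting
identities become polynomial identities after clearing denominators.
-/

open MvPolynomial

section LinearForm

variable {σ R : Type*} [Fintype σ] [CommSemiring R]

noncomputable def linearForm (a : σ → R) : MvPolynomial σ R :=
  ∑ i, C (a i) * X i

theorem isHomogeneous_linearForm (a : σ → R) : (linearForm a).IsHomogeneous 1 :=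
  IsHomogeneous.sum _ _ _ fun i _ => by
    simpa using (isHomogeneous_C σ (a i)).mul (isHomogeneous_X R i)

theorem eval_linearForm (a b : σ → R) : eval b (linearForm a) = ∑ i, a i * b i := by
  simp [linearForm]

end LinearForm

theorem div_eq_mobius_of_mul_eq {K : Type*} [Field K] {l p q p' q' : K} (hq : q ≠ 0)
    (hq' : q' ≠ 0) (hpq : p / q ≠ 1) (h : p' * (p - q) = q' * (p - l * q)) :
    p' / q' = (p / q - l) / (p / q - 1) := by
  have hpq' : p - q ≠ 0 := fun h0 => hpq <| (div_eq_one_iff_eq hq).2 (sub_eq_zero.1 h0)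
  rw [div_sub' hq, div_sub' hq, div_div_div_cancel_right₀ hq, div_eq_div_iff hq' (by simpa)]
  linear_combination h

noncomputable def sigma1Cubic (l t : ℂ) : MvPolynomial (Fin 3) ℂ :=
  C (t ^ 2 * (l - 1) ^ 2 * (t - l) ^ 2) *
    (linearForm ![t, -(1 + t), 1] * linearForm ![-1, 1, 0] * linearForm ![-t, 1, 0])

theorem eval_sigma1Cubic (l t b₀ b₁ b₂ : ℂ) :
    eval ![b₀, b₁, b₂] (sigma1Cubic l t) = t ^ 2 * (l - 1) ^ 2 * (t - l) ^ 2 *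
      ((t * b₀ - (1 + t) * b₁ + b₂) * (b₁ - b₀) * (b₁ - t * b₀)) := by
  simp only [sigma1Cubic, eval_mul, eval_C, eval_linearForm, Fin.sum_univ_three,
    Matrix.cons_val_zero, Matrix.cons_val_one, Matrix.cons_val_two, Matrix.head_cons,
    Matrix.tail_cons]
  ring

theorem isHomogeneous_sigma1Cubic (l t : ℂ) : (sigma1Cubic l t).IsHomogeneous 3 :=
  (isHomogeneous_C _ _).mul
    (((isHomogeneous_linearForm _).mul (isHomogeneous_linearForm _)).mul
      (isHomogeneous_linearForm _))

theorem sigma1Cubic_ne_zero {l t : ℂ} (hl1 : l ≠ 1) (ht0 : t ≠ 0) (htl : t ≠ l) :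
    sigma1Cubic l t ≠ 0 := by
  intro h
  have h011 := congrArg (eval ![0, 1, 1]) h
  simp only [eval_sigma1Cubic, map_zero] at h011
  have : -(t ^ 3 * (l - 1) ^ 2 * (t - l) ^ 2) = 0 := by linear_combination h011
  simp_all [sub_eq_zero]

theorem sigma1_sigma1 (l t b₀ b₁ b₂ : ℂ) :
    sigma10 l t (sigma10 l t b₀ b₁ b₂) (sigma11 l t b₀ b₁ b₂) (sigma12 l t b₀ b₁ b₂) =
        eval ![b₀, b₁, b₂] (sigma1Cubic l t) * b₀ ∧
      sigma11 l t (sigma10 l t b₀ b₁ b₂) (sigma11 l t b₀ b₁ b₂) (sigma12 l t b₀ b₁ b₂) =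
        eval ![b₀, b₁, b₂] (sigma1Cubic l t) * b₁ ∧
      sigma12 l t (sigma10 l t b₀ b₁ b₂) (sigma11 l t b₀ b₁ b₂) (sigma12 l t b₀ b₁ b₂) =
        eval ![b₀, b₁, b₂] (sigma1Cubic l t) * b₂ := by
  simp only [eval_sigma1Cubic, sigma10, sigma11, sigma12]
  exact ⟨by ring, by ring, by ring⟩

theorem phi1_sigma1_cross_mul (l t b₀ b₁ b₂ : ℂ) :
    (sigma11 l t b₀ b₁ b₂ * t - sigma12 l t b₀ b₁ b₂) * (b₁ * t - b₂ - (b₀ * t - b₁)) =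
      (sigma10 l t b₀ b₁ b₂ * t - sigma11 l t b₀ b₁ b₂) *
        (b₁ * t - b₂ - l * (b₀ * t - b₁)) := by
  simp only [sigma10, sigma11, sigma12]
  ring

theorem phi2_sigma1_cross_mul (l t b₀ b₁ b₂ : ℂ) :
    -sigma11 l t b₀ b₁ b₂ * (sigma10 l t b₀ b₁ b₂ * l - sigma11 l t b₀ b₁ b₂ * l
          - sigma11 l t b₀ b₁ b₂ + sigma12 l t b₀ b₁ b₂) *
        (-b₁ * (b₀ * l - b₁ * l - b₁ + b₂) - (b₁ ^ 2 - b₀ * b₂)) =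
      (sigma11 l t b₀ b₁ b₂ ^ 2 - sigma10 l t b₀ b₁ b₂ * sigma12 l t b₀ b₁ b₂) *
        (-b₁ * (b₀ * l - b₁ * l - b₁ + b₂) - l * (b₁ ^ 2 - b₀ * b₂)) := by
  simp only [sigma10, sigma11, sigma12]
  ring

theorem sigma1_involution_lifts_beta1 (l t : ℂ) (hl1 : l ≠ 1)
    (ht0 : t ≠ 0) (htl : t ≠ l) :
    (∃ μ : MvPolynomial (Fin 3) ℂ, μ ≠ 0 ∧ μ.IsHomogeneous 3 ∧
      ∀ b₀ b₁ b₂ : ℂ,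
        sigma10 l t (sigma10 l t b₀ b₁ b₂) (sigma11 l t b₀ b₁ b₂) (sigma12 l t b₀ b₁ b₂) =
            MvPolynomial.eval ![b₀, b₁, b₂] μ * b₀ ∧
        sigma11 l t (sigma10 l t b₀ b₁ b₂) (sigma11 l t b₀ b₁ b₂) (sigma12 l t b₀ b₁ b₂) =
            MvPolynomial.eval ![b₀, b₁, b₂] μ * b₁ ∧
        sigma12 l t (sigma10 l t b₀ b₁ b₂) (sigma11 l t b₀ b₁ b₂) (sigma12 l t b₀ b₁ b₂) =
            MvPolynomial.eval ![b₀, b₁, b₂] μ * b₂) ∧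
    ∀ b₀ b₁ b₂ : ℂ,
      b₀ * t - b₁ ≠ 0 → b₁ ^ 2 - b₀ * b₂ ≠ 0 →
      Phi1 t b₀ b₁ b₂ ≠ 1 → Phi2 l b₀ b₁ b₂ ≠ 1 →
      sigma10 l t b₀ b₁ b₂ * t - sigma11 l t b₀ b₁ b₂ ≠ 0 →
      sigma11 l t b₀ b₁ b₂ ^ 2 - sigma10 l t b₀ b₁ b₂ * sigma12 l t b₀ b₁ b₂ ≠ 0 →
      Phi1 t (sigma10 l t b₀ b₁ b₂) (sigma11 l t b₀ b₁ b₂) (sigma12 l t b₀ b₁ b₂) =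
          (Phi1 t b₀ b₁ b₂ - l) / (Phi1 t b₀ b₁ b₂ - 1) ∧
      Phi2 l (sigma10 l t b₀ b₁ b₂) (sigma11 l t b₀ b₁ b₂) (sigma12 l t b₀ b₁ b₂) =
          (Phi2 l b₀ b₁ b₂ - l) / (Phi2 l b₀ b₁ b₂ - 1) := by
  refine ⟨⟨sigma1Cubic l t, sigma1Cubic_ne_zero hl1 ht0 htl, isHomogeneous_sigma1Cubic l t,
    sigma1_sigma1 l t⟩, fun b₀ b₁ b₂ hq₁ hq₂ hp₁ hp₂ hs₁ hs₂ => ⟨?_, ?_⟩⟩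
  · exact div_eq_mobius_of_mul_eq hq₁ hs₁ hp₁ (phi1_sigma1_cross_mul l t b₀ b₁ b₂)
  · exact div_eq_mobius_of_mul_eq hq₂ hs₂ hp₂ (phi2_sigma1_cross_mul l t b₀ b₁ b₂)
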